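/- Let α₁, …, α₅ ∈ ℂ. There exist polynomials P₁, P₂, P₃ ∈ ℂ[X, Y, Z] (depending only on α₁,…,α₅) such that for every solution (x, y, z) of the modified reduced three-wave interaction system (2) on a connected open set U ⊆ ℂ with x nonvanishing, the functions x₃ = 1/x, y₃ = −((y − α₅)x − √−1(α₂−α₄)/2)x, z₃ = z + x² + √−1(α₁−α₃)x satisfy dx₃/dt = P₁(x₃, y₃, z₃), dy₃/dt = P₂(x₃, y₃, z₃), dz₃/dt = P₃(x₃, y₃, z₃) on U. -/

import Mathlib

/-!
With `c = I (α₂ - α₄) / 2`, the chart coordinates `(x₃, y₃, z₃)` give back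
`(y - α₅) x = c - x₃ y₃`, hence `y - α₅ = x₃ (c - x₃ y₃)` and `z = z₃ - x² - I (α₁ - α₃) x`.
Differentiating the chart coordinates along a solution and substituting these, all positive
powers of `x = 1 / x₃` cancel, so each derivative is a polynomial in `(x₃, y₃, z₃)`.
-/

open Complex

noncomputable section

/-- A solution of the modified reduced three-wave interaction dynamical system (2)
on a set `U ⊆ ℂ`, with parameters `α₁, …, α₅ : ℂ`. -/
def solMTWI (α₁ α₂ α₃ α₄ α₅ : ℂ) (x y z : ℂ → ℂ) (U : Set ℂ) : Prop :=
  ∀ t ∈ U,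
    HasDerivAt x
      (-2 * (y t) ^ 2 - (α₁ + α₃ - 2 * α₅) * y t + z t
        + (α₂ + α₄ + 2 * (α₁ + α₃) * α₅) / 2) t ∧
    HasDerivAt y
      (2 * x t * y t - 2 * α₅ * x t + I * (α₁ - α₃) * y t
        - I * (α₂ - α₄ + 2 * (α₁ - α₃) * α₅) / 2) t ∧
    HasDerivAt z
      (-2 * x t * z t - (α₂ + α₄) * x t + I * (α₂ - α₄) * y t
        - I * (α₁ - α₃) * z t + I * (α₂ * α₃ - α₁ * α₄)) t

namespace MTWI

open MvPolynomial

variable (α₁ α₂ α₃ α₄ α₅ : ℂ)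

def chartU₃ (x y z : ℂ) : Fin 3 → ℂ :=
  ![1 / x, -((y - α₅) * x - I * (α₂ - α₄) / 2) * x, z + x ^ 2 + I * (α₁ - α₃) * x]

def chartE : MvPolynomial (Fin 3) ℂ := C (I * (α₂ - α₄) / 2) - X 1 * X 0

def chartR : MvPolynomial (Fin 3) ℂ :=
  chartE α₂ α₄ * (2 * X 0 * chartE α₂ α₄ + C (α₁ + α₃ + 2 * α₅))

def chartP₁ : MvPolynomial (Fin 3) ℂ :=
  1 + C (I * (α₁ - α₃)) * X 0 - C ((α₂ + α₄) / 2) * X 0 ^ 2 - X 0 ^ 2 * X 2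
    + X 0 ^ 3 * chartR α₁ α₂ α₃ α₄ α₅

def chartP₂ : MvPolynomial (Fin 3) ℂ :=
  -C (I * (α₁ - α₃)) * X 1 + (C (I * (α₂ - α₄) / 2) - 2 * chartE α₂ α₄)
    * (X 2 + C ((α₂ + α₄) / 2) - X 0 * chartR α₁ α₂ α₃ α₄ α₅)

def chartP₃ : MvPolynomial (Fin 3) ℂ :=
  C (I * (α₂ - α₄)) * (C α₅ + X 0 * chartE α₂ α₄)
    + C (I * (α₂ * α₃ - α₁ * α₄) + I * (α₁ - α₃) * (α₂ + α₄) / 2)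
    - (2 + C (I * (α₁ - α₃)) * X 0) * chartR α₁ α₂ α₃ α₄ α₅

variable {α₁ α₂ α₃ α₄ α₅} {x : ℂ} (y z : ℂ)

theorem eval_chartE (hx : x ≠ 0) :
    eval (chartU₃ α₁ α₂ α₃ α₄ α₅ x y z) (chartE α₂ α₄) = (y - α₅) * x := by
  simp only [chartE, chartU₃, map_sub, map_mul, eval_C, eval_X, Matrix.cons_val_zero,
    Matrix.cons_val_one]
  field_simp
  ring

theorem eval_chartR (hx : x ≠ 0) :
    eval (chartU₃ α₁ α₂ α₃ α₄ α₅ x y z) (chartR α₁ α₂ α₃ α₄ α₅)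
      = (y - α₅) * x * (2 * y + α₁ + α₃) := by
  simp only [chartR, map_mul, map_add, eval_chartE y z hx, eval_C, map_ofNat, eval_X]
  simp only [chartU₃, Matrix.cons_val_zero]
  field_simp
  ring

variable {x y z : ℂ → ℂ} {U : Set ℂ} {t : ℂ}

theorem hasDerivAt_chartU₃_zero (hsol : solMTWI α₁ α₂ α₃ α₄ α₅ x y z U) (ht : t ∈ U)
    (hx : x t ≠ 0) :
    HasDerivAt (fun s => 1 / x s)
      (eval (chartU₃ α₁ α₂ α₃ α₄ α₅ (x t) (y t) (z t)) (chartP₁ α₁ α₂ α₃ α₄ α₅)) t := by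
  refine ((hasDerivAt_const t (1 : ℂ)).div (hsol t ht).1 hx).congr_deriv ?_
  simp only [chartP₁, map_add, map_sub, map_mul, map_pow, map_one, eval_C, eval_X,
    eval_chartR _ _ hx]
  simp only [chartU₃, Matrix.cons_val_zero, Matrix.cons_val_two, Matrix.tail_cons,
    Matrix.head_cons]
  field_simp
  ring

theorem hasDerivAt_chartU₃_one (hsol : solMTWI α₁ α₂ α₃ α₄ α₅ x y z U) (ht : t ∈ U)
    (hx : x t ≠ 0) :
    HasDerivAt (fun s => -((y s - α₅) * x s - I * (α₂ - α₄) / 2) * x s)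
      (eval (chartU₃ α₁ α₂ α₃ α₄ α₅ (x t) (y t) (z t)) (chartP₂ α₁ α₂ α₃ α₄ α₅)) t := by
  obtain ⟨hx', hy', -⟩ := hsol t ht
  refine ((((hy'.sub_const α₅).mul hx').sub_const (I * (α₂ - α₄) / 2)).neg.mul hx').congr_deriv ?_
  simp only [chartP₂, map_add, map_sub, map_mul, map_neg, map_ofNat, eval_C, eval_X,
    eval_chartR _ _ hx, eval_chartE _ _ hx, Pi.neg_apply, Pi.mul_apply]
  simp only [chartU₃, Matrix.cons_val_zero, Matrix.cons_val_one, Matrix.cons_val_two,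
    Matrix.tail_cons, Matrix.head_cons]
  field_simp
  ring

theorem hasDerivAt_chartU₃_two (hsol : solMTWI α₁ α₂ α₃ α₄ α₅ x y z U) (ht : t ∈ U)
    (hx : x t ≠ 0) :
    HasDerivAt (fun s => z s + x s ^ 2 + I * (α₁ - α₃) * x s)
      (eval (chartU₃ α₁ α₂ α₃ α₄ α₅ (x t) (y t) (z t)) (chartP₃ α₁ α₂ α₃ α₄ α₅)) t := by
  obtain ⟨hx', -, hz'⟩ := hsol t ht
  refine ((hz'.add (hx'.pow 2)).add (hx'.const_mul (I * (α₁ - α₃)))).congr_deriv ?_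
  simp only [chartP₃, map_add, map_sub, map_mul, map_ofNat, eval_C, eval_X,
    eval_chartR _ _ hx, eval_chartE _ _ hx]
  simp only [chartU₃, Matrix.cons_val_zero]
  field_simp
  ring

end MTWI

theorem stmt14 (α₁ α₂ α₃ α₄ α₅ : ℂ) :
    ∃ P₁ P₂ P₃ : MvPolynomial (Fin 3) ℂ,
      ∀ (U : Set ℂ), IsOpen U → IsConnected U →
      ∀ x y z : ℂ → ℂ, solMTWI α₁ α₂ α₃ α₄ α₅ x y z U → (∀ t ∈ U, x t ≠ 0) →
      ∀ t ∈ U,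
        HasDerivAt (fun s => 1 / x s)
          (MvPolynomial.eval ![1 / x t, -((y t - α₅) * x t - I * (α₂ - α₄) / 2) * x t, z t + (x t) ^ 2 + I * (α₁ - α₃) * x t] P₁) t ∧
        HasDerivAt (fun s => -((y s - α₅) * x s - I * (α₂ - α₄) / 2) * x s)
          (MvPolynomial.eval ![1 / x t, -((y t - α₅) * x t - I * (α₂ - α₄) / 2) * x t, z t + (x t) ^ 2 + I * (α₁ - α₃) * x t] P₂) t ∧
        HasDerivAt (fun s => z s + (x s) ^ 2 + I * (α₁ - α₃) * x s)
          (MvPolynomial.eval ![1 / x t, -((y t - α₅) * x t - I * (α₂ - α₄) / 2) * x t, z t + (x t) ^ 2 + I * (α₁ - α₃) * x t] P₃) t := by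
  refine ⟨MTWI.chartP₁ α₁ α₂ α₃ α₄ α₅, MTWI.chartP₂ α₁ α₂ α₃ α₄ α₅, MTWI.chartP₃ α₁ α₂ α₃ α₄ α₅,
    fun U _ _ x y z hsol hx t ht => ?_⟩
  exact ⟨MTWI.hasDerivAt_chartU₃_zero hsol ht (hx t ht),
    MTWI.hasDerivAt_chartU₃_one hsol ht (hx t ht), MTWI.hasDerivAt_chartU₃_two hsol ht (hx t ht)⟩
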